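/- Let r ≥ 1 be an integer, ε > 0 with 60r√ε < 1 and 90√ε < 1, and n sufficiently large. Let G be a non-bipartite B_{r+1}-free simple graph on n vertices with the maximum number of edges among such graphs, let C be a shortest odd cycle of G, and let V(G) = S ∪ T be a partition realizing a maximum cut with (1/2 − (3/2)√ε)n ≤ |S|, |T| ≤ (1/2 + (3/2)√ε)n. Let L = {v ∈ V(G) : d(v) ≤ (1/2 − 4√ε)n} and W = {v ∈ S : d_S(v) ≥ (7/2)√ε·n} ∪ {v ∈ T : d_T(v) ≥ (7/2)√ε·n}, and suppose |L| ≤ √ε·n, |W| ≤ (4/7)√ε·n, and every vertex of T \ (L ∪ W) has more than (1/2 − 8√ε)n neighbours in S. Then L ⊆ V(C), i.e., every vertex of degree at most (1/2 − 4√ε)n lies on C. -/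

import Mathlib

open SimpleGraph Set

/-- `G` contains no book `B_{r+1}`, i.e. no two adjacent vertices of `G` have at least
`r + 1` common neighbours. -/
def BookFree {V : Type*} (r : ℕ) (G : SimpleGraph V) : Prop :=
  ∀ u v : V, G.Adj u v → ({w : V | G.Adj u w ∧ G.Adj v w}).ncard ≤ r

/-- `d_X(v)`: the number of neighbours of `v` lying in `X`. -/
noncomputable def degIn {V : Type*} (G : SimpleGraph V) (X : Set V) (v : V) : ℕ :=
  {w ∈ X | G.Adj v w}.ncard

/-- `e(S, T)`: the number of edges of `G` with one endpoint in `S` and the other in `T`. -/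
noncomputable def cutCount {V : Type*} (G : SimpleGraph V) (S T : Set V) : ℕ :=
  {e ∈ G.edgeSet | ∃ u ∈ S, ∃ v ∈ T, e = s(u, v)}.ncard

/-- `(S, T)` is a partition of the vertex set of `G` realizing a maximum cut. -/
def IsMaxCut {V : Type*} (G : SimpleGraph V) (S T : Set V) : Prop :=
  S ∪ T = Set.univ ∧ S ∩ T = ∅ ∧
    ∀ S' T' : Set V, S' ∪ T' = Set.univ → S' ∩ T' = ∅ →
      cutCount G S' T' ≤ cutCount G S T

/-
Every vertex of `A = S \ (L ∪ W)` has degree above `(1/2 - 4√ε)n` but fewer than `(7/2)√ε·n`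
neighbours in `S`, so it sees more than half of `T \ (L ∪ W)`; two adjacent vertices of `A` would
then have more than `r` common neighbours. Hence `A` is independent. If some `x ∈ L` missed the
odd cycle `C`, delete the edges at `x` and join `x` to `A` instead: no triangle passes through `x`,
so the graph stays `B_{r+1}`-free; it still contains `C`; and it has more edges than `G`, since
`|A| ≥ (1/2 - (43/14)√ε)n > (1/2 - 4√ε)n ≥ d(x)`. This contradicts the maximality of `G`.
-/

variable {V : Type*} {G : SimpleGraph V}

section degIn

variable [Finite V]

theorem degIn_add_degIn {S T : Set V} (hU : S ∪ T = univ) (hI : S ∩ T = ∅) (u : V) :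
    degIn G S u + degIn G T u = (G.neighborSet u).ncard := by
  have hdisj : Disjoint {w ∈ S | G.Adj u w} {w ∈ T | G.Adj u w} :=
    disjoint_iff_inter_eq_empty.2 <| subset_empty_iff.1 <|
      hI ▸ inter_subset_inter (sep_subset _ _) (sep_subset _ _)
  rw [degIn, degIn, ← ncard_union_eq hdisj, ← sep_union]
  congr 1
  ext w
  simp [← mem_union, hU]

theorem degIn_le_degIn_sdiff_add_ncard (T X : Set V) (u : V) :
    degIn G T u ≤ degIn G (T \ X) u + X.ncard := by
  refine (ncard_le_ncard (t := {w ∈ T \ X | G.Adj u w} ∪ X) ?_).trans (ncard_union_le _ _)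
  rintro w ⟨hwT, huw⟩
  by_cases hwX : w ∈ X
  exacts [Or.inr hwX, Or.inl ⟨⟨hwT, hwX⟩, huw⟩]

end degIn

namespace BookFree

variable [Finite V] {r : ℕ}

theorem degIn_add_degIn_le (hG : BookFree r G) {u w : V} (huw : G.Adj u w) (P : Set V) :
    degIn G P u + degIn G P w ≤ P.ncard + r := by
  rw [degIn, degIn, ← ncard_union_add_ncard_inter]
  refine add_le_add (ncard_le_ncard (t := P) (union_subset (sep_subset _ _) (sep_subset _ _))) ?_
  exact (ncard_le_ncard (t := {z | G.Adj u z ∧ G.Adj w z}) fun z hz => ⟨hz.1.2, hz.2.2⟩).trans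
    (hG u w huw)

theorem isIndepSet_of_lt_two_mul_degIn (hG : BookFree r G) {A P : Set V}
    (hA : ∀ u ∈ A, P.ncard + r < 2 * degIn G P u) : G.IsIndepSet A := by
  intro u hu w hw _ huw
  have := hG.degIn_add_degIn_le huw P
  have := hA u hu
  have := hA w hw
  omega

end BookFree

def SimpleGraph.replaceNeighborSet (G : SimpleGraph V) (x : V) (A : Set V) : SimpleGraph V :=
  G.deleteIncidenceSet x ⊔ fromRel fun a b => a = x ∧ b ∈ A

namespace SimpleGraph

variable {x : V} {A : Set V}

theorem replaceNeighborSet_adj_of_ne {a b : V} (ha : a ≠ x) (hb : b ≠ x) :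
    (G.replaceNeighborSet x A).Adj a b ↔ G.Adj a b := by
  simp [replaceNeighborSet, deleteIncidenceSet_adj, ha, hb]

theorem replaceNeighborSet_adj_left (hx : x ∉ A) {b : V} :
    (G.replaceNeighborSet x A).Adj x b ↔ b ∈ A := by
  simp only [replaceNeighborSet, sup_adj, deleteIncidenceSet_adj, fromRel_adj]
  constructor
  · rintro (⟨-, h, -⟩ | ⟨-, ⟨-, hb⟩ | ⟨-, hxA⟩⟩)
    exacts [absurd rfl h, hb, absurd hxA hx]
  · intro hb
    exact Or.inr ⟨fun h => hx (h ▸ hb), Or.inl ⟨trivial, hb⟩⟩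

theorem deleteIncidenceSet_replaceNeighborSet :
    (G.replaceNeighborSet x A).deleteIncidenceSet x = G.deleteIncidenceSet x := by
  ext a b
  simp only [deleteIncidenceSet_adj]
  constructor
  · rintro ⟨h, ha, hb⟩
    exact ⟨(replaceNeighborSet_adj_of_ne ha hb).1 h, ha, hb⟩
  · rintro ⟨h, ha, hb⟩
    exact ⟨(replaceNeighborSet_adj_of_ne ha hb).2 h, ha, hb⟩

theorem ncard_edgeSet_eq_deleteIncidenceSet_add [Finite V] (H : SimpleGraph V) (x : V) :
    H.edgeSet.ncard = (H.deleteIncidenceSet x).edgeSet.ncard + (H.neighborSet x).ncard := by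
  classical
  rw [edgeSet_deleteIncidenceSet, ← Nat.card_coe_set_eq (H.neighborSet x),
    ← Nat.card_congr (H.incidenceSetEquivNeighborSet x), Nat.card_coe_set_eq,
    ncard_sdiff_add_ncard_of_subset (H.incidenceSet_subset x)]

theorem ncard_edgeSet_replaceNeighborSet_add [Finite V] (hx : x ∉ A) :
    (G.replaceNeighborSet x A).edgeSet.ncard + (G.neighborSet x).ncard =
      G.edgeSet.ncard + A.ncard := by
  have hN : (G.replaceNeighborSet x A).neighborSet x = A := by
    ext b
    exact replaceNeighborSet_adj_left hx
  rw [ncard_edgeSet_eq_deleteIncidenceSet_add (G.replaceNeighborSet x A) x,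
    ncard_edgeSet_eq_deleteIncidenceSet_add G x, deleteIncidenceSet_replaceNeighborSet, hN]
  ring

/-- Since `A` is independent, no triangle of the new graph passes through `x`. -/
theorem _root_.BookFree.replaceNeighborSet [Finite V] {r : ℕ} (hG : BookFree r G)
    (hA : G.IsIndepSet A) (hx : x ∉ A) : BookFree r (G.replaceNeighborSet x A) := by
  have hxA {a : V} (ha : a ∈ A) : a ≠ x := fun h => hx (h ▸ ha)
  have hfree {a b : V} (hab : (G.replaceNeighborSet x A).Adj a b) (ha : a = x) :
      {z | (G.replaceNeighborSet x A).Adj a z ∧ (G.replaceNeighborSet x A).Adj b z} = ∅ := by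
    subst ha
    have hb := (replaceNeighborSet_adj_left hx).1 hab
    refine eq_empty_of_forall_notMem fun z ⟨hz, hbz⟩ => ?_
    have hz := (replaceNeighborSet_adj_left hx).1 hz
    exact hA hb hz hbz.ne ((replaceNeighborSet_adj_of_ne (hxA hb) (hxA hz)).1 hbz)
  intro a b hab
  by_cases ha : a = x
  · simp [hfree hab ha]
  by_cases hb : b = x
  · simp_rw [and_comm (a := (G.replaceNeighborSet x A).Adj a _), hfree hab.symm hb]
    simp
  have hGab := (replaceNeighborSet_adj_of_ne ha hb).1 hab
  refine (ncard_le_ncard (t := {z | G.Adj a z ∧ G.Adj b z}) fun z hz => ?_).trans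
    (hG a b hGab)
  obtain ⟨haz, hbz⟩ := hz
  by_cases hz : z = x
  · subst hz
    exact absurd hGab <| hA ((replaceNeighborSet_adj_left hx).1 haz.symm)
      ((replaceNeighborSet_adj_left hx).1 hbz.symm) hab.ne
  · exact ⟨(replaceNeighborSet_adj_of_ne ha hz).1 haz,
      (replaceNeighborSet_adj_of_ne hb hz).1 hbz⟩

theorem not_colorable_two_replaceNeighborSet {v : V} (p : G.Walk v v) (hp : Odd p.length)
    (hx : x ∉ p.support) : ¬ (G.replaceNeighborSet x A).Colorable 2 := by
  have hedges : ∀ e ∈ p.edges, e ∈ (G.replaceNeighborSet x A).edgeSet := by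
    intro e he
    induction e using Sym2.ind with
    | _ a b =>
      have ha : a ≠ x := fun h => hx (h ▸ p.fst_mem_support_of_mem_edges he)
      have hb : b ≠ x := fun h => hx (h ▸ p.snd_mem_support_of_mem_edges he)
      exact (replaceNeighborSet_adj_of_ne ha hb).2 (p.edges_subset_edgeSet he)
  intro hcol
  exact Nat.not_even_iff_odd.2 (p.length_transfer hedges ▸ hp)
    (two_colorable_iff_forall_loop_even.1 hcol _ (p.transfer _ hedges))

end SimpleGraph

theorem isIndepSet_sdiff_of_bookFree [Finite V] {r : ℕ} (hG : BookFree r G) {S T L W : Set V}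
    (hU : S ∪ T = univ) (hI : S ∩ T = ∅) {s N : ℝ} (hs : 90 * s < 1) (hN : 4 * r + 5 ≤ N)
    (hT : T.ncard ≤ (1 / 2 + 3 / 2 * s) * N) (hL : L.ncard ≤ s * N)
    (hW : W.ncard ≤ 4 / 7 * s * N)
    (hdeg : ∀ u ∉ L, (1 / 2 - 4 * s) * N < (G.neighborSet u).ncard)
    (hdegS : ∀ u ∈ S \ W, degIn G S u < 7 / 2 * s * N) :
    G.IsIndepSet (S \ (L ∪ W)) := by
  refine hG.isIndepSet_of_lt_two_mul_degIn (P := T \ (L ∪ W)) fun u ⟨huS, huLW⟩ => ?_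
  have hsplit := degIn_add_degIn (G := G) hU hI u
  have hdiff := degIn_le_degIn_sdiff_add_ncard (G := G) T (L ∪ W) u
  have hLW := ncard_union_le L W
  have hP : (T \ (L ∪ W)).ncard ≤ T.ncard := ncard_le_ncard sdiff_subset
  have hu := hdeg u fun h => huLW (Or.inl h)
  have huS := hdegS u ⟨huS, fun h => huLW (Or.inr h)⟩
  have hsN : s * N < N / 90 := by nlinarith
  rify at hsplit hdiff hLW hP ⊢
  linarith

theorem stmt_16_general (r : ℕ) (ε : ℝ) (hε : 0 < ε)
    (h2 : 90 * Real.sqrt ε < 1) :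
    ∃ n₀ : ℕ, ∀ n : ℕ, n₀ ≤ n →
      ∀ G : SimpleGraph (Fin n), ¬ G.Colorable 2 → BookFree r G →
        (∀ H : SimpleGraph (Fin n), ¬ H.Colorable 2 → BookFree r H →
          H.edgeSet.ncard ≤ G.edgeSet.ncard) →
        ∀ (v : Fin n) (C : G.Walk v v), C.IsCycle → Odd C.length →
          (∀ (u : Fin n) (D : G.Walk u u), D.IsCycle → Odd D.length →
            C.length ≤ D.length) →
        ∀ S T : Set (Fin n), IsMaxCut G S T →
          ((1 / 2 - 3 / 2 * Real.sqrt ε) * (n : ℝ) ≤ (S.ncard : ℝ)) →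
          ((S.ncard : ℝ) ≤ (1 / 2 + 3 / 2 * Real.sqrt ε) * (n : ℝ)) →
          ((1 / 2 - 3 / 2 * Real.sqrt ε) * (n : ℝ) ≤ (T.ncard : ℝ)) →
          ((T.ncard : ℝ) ≤ (1 / 2 + 3 / 2 * Real.sqrt ε) * (n : ℝ)) →
        ∀ L W : Set (Fin n),
          L = {v | ((G.neighborSet v).ncard : ℝ) ≤ (1 / 2 - 4 * Real.sqrt ε) * (n : ℝ)} →
          W = {v ∈ S | (7 / 2 : ℝ) * Real.sqrt ε * (n : ℝ) ≤ (degIn G S v : ℝ)} ∪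
              {v ∈ T | (7 / 2 : ℝ) * Real.sqrt ε * (n : ℝ) ≤ (degIn G T v : ℝ)} →
          ((L.ncard : ℝ) ≤ Real.sqrt ε * (n : ℝ)) →
          ((W.ncard : ℝ) ≤ 4 / 7 * Real.sqrt ε * (n : ℝ)) →
          (∀ x ∈ T \ (L ∪ W), (1 / 2 - 8 * Real.sqrt ε) * (n : ℝ) < (degIn G S x : ℝ)) →
          ∀ x ∈ L, x ∈ C.support := by
  refine ⟨4 * r + 5, fun n hn G _ hG hmax v C _ hC _ S T hcut hS _ _ hT L W hL hW hLn hWn _ x hxL =>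
    ?_⟩
  by_contra hxC
  obtain ⟨hU, hI, -⟩ := hcut
  have hA : G.IsIndepSet (S \ (L ∪ W)) := by
    refine isIndepSet_sdiff_of_bookFree hG hU hI h2 (by exact_mod_cast hn) hT hLn hWn
      (fun u hu => not_le.1 fun h => hu (hL ▸ h)) fun u ⟨huS, huW⟩ => ?_
    exact not_le.1 fun h => huW (hW ▸ Or.inl ⟨huS, h⟩)
  have hxA : x ∉ S \ (L ∪ W) := fun h => h.2 (Or.inl hxL)
  have hdeg : (G.neighborSet x).ncard < (S \ (L ∪ W)).ncard := by
    have hSA := ncard_le_ncard_sdiff_add_ncard S (L ∪ W)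
    have hLW := ncard_union_le L W
    have hsn : 0 < √ε * n := mul_pos (Real.sqrt_pos.2 hε) (by exact_mod_cast (by omega : 0 < n))
    have hx : ((G.neighborSet x).ncard : ℝ) ≤ (1 / 2 - 4 * √ε) * n := by
      rw [hL] at hxL; exact hxL
    rify at hSA hLW ⊢
    linarith
  have hedges := ncard_edgeSet_replaceNeighborSet_add (G := G) hxA
  have := hmax _ (not_colorable_two_replaceNeighborSet C hC hxC) (hG.replaceNeighborSet hA hxA)
  omega

/-- Let `r ≥ 1` and `ε > 0` with `60r√ε < 1`, `90√ε < 1`, and `n` sufficiently large.  Let `G`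
be a non-bipartite `B_{r+1}`-free graph on `n` vertices with the maximum number of edges among
such graphs, `C` a shortest odd cycle of `G`, and `V(G) = S ∪ T` a maximum-cut partition with
`(1/2 - (3/2)√ε)n ≤ |S|, |T| ≤ (1/2 + (3/2)√ε)n`.  With `L` and `W` as below, if `|L| ≤ √ε·n`,
`|W| ≤ (4/7)√ε·n`, and every vertex of `T \ (L ∪ W)` has more than `(1/2 - 8√ε)n` neighbours
in `S`, then `L ⊆ V(C)`. -/
theorem stmt_16 (r : ℕ) (hr : 1 ≤ r) (ε : ℝ) (hε : 0 < ε)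
    (h1 : 60 * (r : ℝ) * Real.sqrt ε < 1) (h2 : 90 * Real.sqrt ε < 1) :
    ∃ n₀ : ℕ, ∀ n : ℕ, n₀ ≤ n →
      ∀ G : SimpleGraph (Fin n), ¬ G.Colorable 2 → BookFree r G →
        (∀ H : SimpleGraph (Fin n), ¬ H.Colorable 2 → BookFree r H →
          H.edgeSet.ncard ≤ G.edgeSet.ncard) →
        ∀ (v : Fin n) (C : G.Walk v v), C.IsCycle → Odd C.length →
          (∀ (u : Fin n) (D : G.Walk u u), D.IsCycle → Odd D.length →
            C.length ≤ D.length) →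
        ∀ S T : Set (Fin n), IsMaxCut G S T →
          ((1 / 2 - 3 / 2 * Real.sqrt ε) * (n : ℝ) ≤ (S.ncard : ℝ)) →
          ((S.ncard : ℝ) ≤ (1 / 2 + 3 / 2 * Real.sqrt ε) * (n : ℝ)) →
          ((1 / 2 - 3 / 2 * Real.sqrt ε) * (n : ℝ) ≤ (T.ncard : ℝ)) →
          ((T.ncard : ℝ) ≤ (1 / 2 + 3 / 2 * Real.sqrt ε) * (n : ℝ)) →
        ∀ L W : Set (Fin n),
          L = {v | ((G.neighborSet v).ncard : ℝ) ≤ (1 / 2 - 4 * Real.sqrt ε) * (n : ℝ)} →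
          W = {v ∈ S | (7 / 2 : ℝ) * Real.sqrt ε * (n : ℝ) ≤ (degIn G S v : ℝ)} ∪
              {v ∈ T | (7 / 2 : ℝ) * Real.sqrt ε * (n : ℝ) ≤ (degIn G T v : ℝ)} →
          ((L.ncard : ℝ) ≤ Real.sqrt ε * (n : ℝ)) →
          ((W.ncard : ℝ) ≤ 4 / 7 * Real.sqrt ε * (n : ℝ)) →
          (∀ x ∈ T \ (L ∪ W), (1 / 2 - 8 * Real.sqrt ε) * (n : ℝ) < (degIn G S x : ℝ)) →
          ∀ x ∈ L, x ∈ C.support :=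
  stmt_16_general r ε hε h2
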